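/- Define S_m = D_{m+1} − D_m. Then for every m ≥ 0 and every k with 0 < k < p: S_{pm+k} = p − k − 1 − 𝟙{S_m < p−1−k}, where 𝟙{·} is the indicator (equal to 1 if the condition holds and 0 otherwise). -/

import Mathlib

/-!
Reading the first digits of a sequence as a base-`p` integer `b`, the odometer becomes
`b ↦ b + 1` and `φ` becomes the lowest base-`p` digit of `b` that is not `p - 1`. Since `φ^(m)`
only reads finitely many digits on `Γ*`, which has full measure, and every cylinder has positive
measure, `D_m` is the maximum over `b ∈ ℕ` of `∑_{j<m} φ(b + j)`. A window of `p` consecutive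
integers starting at a multiple of `p` contributes `0 + 1 + ⋯ + (p - 2)` plus the value of `φ` at
the quotient, and optimizing over the residue of the starting point (the best ones are `p - 1 - k`
and `p - k`) gives, for `0 < k ≤ p`,
`D_{pn+k} + ∑_{i<p-k} i = (n + 1) ∑_{i<p-1} i + max (D_n + p - 1 - k) D_{n+1}`.
Comparing the cases `k` and `k + 1` yields the recursion for `S`.
-/

open MeasureTheory
open scoped NNReal ENNReal

namespace Chacon

/-- The space of digit sequences with digits in `{0, …, p-1}`. -/
def Gamma (p : ℕ) : Set (ℕ → ℕ) := {x | ∀ i, x i < p}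

/-- `Γ*`: sequences with digits `< p` having infinitely many coordinates `≠ p - 1`. -/
def GammaStar (p : ℕ) : Set (ℕ → ℕ) :=
  {x | (∀ i, x i < p) ∧ {i | x i ≠ p - 1}.Infinite}

/-- The least index `i` with `x i ≠ p - 1`. -/
noncomputable def firstNot (p : ℕ) (x : ℕ → ℕ) : ℕ :=
  sInf {i | x i ≠ p - 1}

/-- `φ(x) = x_i` where `i` is the least index with `x_i ≠ p - 1`. -/
noncomputable def phi (p : ℕ) (x : ℕ → ℕ) : ℕ :=
  x (firstNot p x)

/-- The odometer `S` (addition of `1` with carry): the initial run of digits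
`p - 1` is replaced by zeros, and the first digit `≠ p - 1` is increased by one. -/
noncomputable def odo (p : ℕ) (x : ℕ → ℕ) : ℕ → ℕ :=
  fun i =>
    if i < firstNot p x then 0
    else if i = firstNot p x then x i + 1
    else x i

/-- `φ^(m)(x) = ∑_{j=0}^{m-1} φ(S^j x)`. -/
noncomputable def phiSum (p m : ℕ) (x : ℕ → ℕ) : ℕ :=
  ∑ j ∈ Finset.range m, phi p ((odo p)^[j] x)

/-- The base-`p` digit sequence of a real number `u`. -/
noncomputable def digitsOf (p : ℕ) (u : ℝ) : ℕ → ℕ :=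
  fun i => (⌊u * (p : ℝ) ^ (i + 1)⌋).toNat % p

/-- `λ`: the product probability measure on digit sequences under which the
coordinates are i.i.d., uniformly distributed in `{0, …, p-1}`; it is realized
concretely as the distribution of the base-`p` digit sequence of a uniformly
distributed random point of `[0,1)`. -/
noncomputable def lam (p : ℕ) : Measure (ℕ → ℕ) :=
  Measure.map (digitsOf p) (volume.restrict (Set.Ico (0 : ℝ) 1))

/-- `π_m(j) = λ({x : φ^(m)(x) = j})`. -/
noncomputable def pim (p m j : ℕ) : ℝ≥0∞ :=
  lam p {x | phiSum p m x = j}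

/-- `P_m^p(t) = ∑_{j ≥ 0} π_m(j) t^j`, a real polynomial
(the sum is over `0 ≤ j ≤ m (p-2)` since `0 ≤ φ^(m) ≤ m (p-2)` a.s.). -/
noncomputable def P (p m : ℕ) (t : ℝ) : ℝ :=
  ∑ j ∈ Finset.range (m * (p - 2) + 1), (pim p m j).toReal * t ^ j

/-- The `n`-th triangular number `Δ_n = n (n+1) / 2`. -/
def tri (n : ℕ) : ℕ := n * (n + 1) / 2

/-- The degree `D_m` of `P_m^p`: the largest `j` with `π_m(j) ≠ 0`. -/
noncomputable def D (p m : ℕ) : ℕ := sSup {j | pim p m j ≠ 0}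

/-- The lower degree `d_m` of `P_m^p`: the least `j` with `π_m(j) ≠ 0`. -/
noncomputable def d (p m : ℕ) : ℕ := sInf {j | pim p m j ≠ 0}


/-- `S_m = D_{m+1} - D_m`. -/
noncomputable def Sseq (p m : ℕ) : ℕ := D p (m + 1) - D p m

open Finset

section Odometer

variable {p : ℕ} {x y : ℕ → ℕ}

theorem firstNot_le {i : ℕ} (h : x i ≠ p - 1) : firstNot p x ≤ i := Nat.sInf_le h

theorem apply_firstNot_ne (h : ∃ i, x i ≠ p - 1) : x (firstNot p x) ≠ p - 1 := Nat.sInf_mem h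

theorem firstNot_eq_zero (h : x 0 ≠ p - 1) : firstNot p x = 0 :=
  Nat.sInf_eq_zero.mpr (Or.inl h)

theorem firstNot_eq_succ (h0 : x 0 = p - 1) (h : ∃ i, x i ≠ p - 1) :
    firstNot p x = firstNot p (fun i => x (i + 1)) + 1 := by
  have hpos : 1 ≤ firstNot p x := by
    by_contra! hz
    exact apply_firstNot_ne h (by rwa [Nat.lt_one_iff.mp hz])
  exact (Nat.sInf_add hpos).symm

theorem phi_of_head_ne (h : x 0 ≠ p - 1) : phi p x = x 0 := by
  rw [phi, firstNot_eq_zero h]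

theorem phi_of_head_eq (h0 : x 0 = p - 1) (h : ∃ i, x i ≠ p - 1) :
    phi p x = phi p (fun i => x (i + 1)) := by
  rw [phi, firstNot_eq_succ h0 h]
  rfl

theorem odo_zero_of_head_ne (h : x 0 ≠ p - 1) : odo p x 0 = x 0 + 1 := by
  simp [odo, firstNot_eq_zero h]

theorem odo_succ_of_head_ne (h : x 0 ≠ p - 1) (i : ℕ) : odo p x (i + 1) = x (i + 1) := by
  simp [odo, firstNot_eq_zero h]

theorem odo_zero_of_head_eq (h0 : x 0 = p - 1) (h : ∃ i, x i ≠ p - 1) : odo p x 0 = 0 := by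
  simp [odo, firstNot_eq_succ h0 h]

theorem odo_succ_of_head_eq (h0 : x 0 = p - 1) (h : ∃ i, x i ≠ p - 1) (i : ℕ) :
    odo p x (i + 1) = odo p (fun i => x (i + 1)) i := by
  simp [odo, firstNot_eq_succ h0 h]

theorem phiSum_succ (m : ℕ) (x : ℕ → ℕ) :
    phiSum p (m + 1) x = phi p x + phiSum p m (odo p x) := by
  simp only [phiSum, sum_range_succ', Function.iterate_succ_apply,
    Function.iterate_zero_apply]
  rw [add_comm]

theorem firstNot_congr {N : ℕ} (hxy : ∀ i < N, x i = y i) (hy : ∃ i < N, y i ≠ p - 1) :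
    firstNot p x = firstNot p y ∧ firstNot p y < N := by
  obtain ⟨i, hiN, hi⟩ := hy
  have hyN : firstNot p y < N := (firstNot_le hi).trans_lt hiN
  have hxy_le : firstNot p x ≤ firstNot p y :=
    firstNot_le (by rw [hxy _ hyN]; exact apply_firstNot_ne ⟨i, hi⟩)
  have hxN : firstNot p x < N := hxy_le.trans_lt hyN
  have hx : x (firstNot p x) ≠ p - 1 := apply_firstNot_ne ⟨i, by rwa [hxy _ hiN]⟩
  exact ⟨hxy_le.antisymm (firstNot_le (by rwa [← hxy _ hxN])), hyN⟩

theorem phi_congr {N : ℕ} (hxy : ∀ i < N, x i = y i) (hy : ∃ i < N, y i ≠ p - 1) :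
    phi p x = phi p y := by
  obtain ⟨hfirst, hN⟩ := firstNot_congr hxy hy
  rw [phi, phi, hfirst, hxy _ hN]

theorem odo_congr {N : ℕ} (hxy : ∀ i < N, x i = y i) (hy : ∃ i < N, y i ≠ p - 1) :
    ∀ i < N, odo p x i = odo p y i := by
  intro i hi
  simp only [odo, (firstNot_congr hxy hy).1, hxy i hi]

end Odometer

section DigitSeq

variable {p : ℕ}

def digitSeq (p b : ℕ) : ℕ → ℕ := fun i => b / p ^ i % p

theorem digitSeq_zero (b : ℕ) : digitSeq p b 0 = b % p := by simp [digitSeq]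

theorem digitSeq_succ (b i : ℕ) : digitSeq p b (i + 1) = digitSeq p (b / p) i := by
  simp [digitSeq, Nat.div_div_eq_div_mul, pow_succ']

theorem digitSeq_lt (hp : 0 < p) (b i : ℕ) : digitSeq p b i < p := Nat.mod_lt _ hp

theorem digitSeq_eq_zero_of_lt {b i : ℕ} (h : b < p ^ i) : digitSeq p b i = 0 := by
  simp [digitSeq, Nat.div_eq_of_lt h]

theorem exists_digitSeq_ne (hp : 2 ≤ p) (b : ℕ) : ∃ i, digitSeq p b i ≠ p - 1 :=
  ⟨b, by rw [digitSeq_eq_zero_of_lt (Nat.lt_pow_self (by omega))]; omega⟩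

theorem exists_digitSeq_ne_of_lt (hp : 2 ≤ p) {b N : ℕ} (h : b + 1 < p ^ N) :
    ∃ i < N, digitSeq p b i ≠ p - 1 := by
  contrapose! h
  induction N generalizing b with
  | zero => simp
  | succ N ih =>
    have hlow : b % p = p - 1 := by rw [← digitSeq_zero]; exact h 0 (by omega)
    have hhigh : p ^ N ≤ b / p + 1 :=
      ih fun i hi => by rw [← digitSeq_succ]; exact h (i + 1) (by omega)
    have := Nat.div_add_mod b p
    calc p ^ (N + 1) = p * p ^ N := pow_succ' p N
      _ ≤ p * (b / p + 1) := Nat.mul_le_mul_left p hhigh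
      _ = b + 1 := by rw [mul_add]; omega

theorem sum_mul_pow_lt {n : ℕ} {d : ℕ → ℕ} (hd : ∀ i < n, d i < p) :
    ∑ i ∈ range n, d i * p ^ i < p ^ n := by
  induction n with
  | zero => simp
  | succ n ih =>
    rw [sum_range_succ, pow_succ]
    have := ih fun i hi => hd i (by omega)
    have := Nat.mul_le_mul_right (p ^ n) (show d n + 1 ≤ p from hd n (by omega))
    nlinarith

theorem digitSeq_sum_mul_pow {n j : ℕ} {d : ℕ → ℕ} (hd : ∀ i < n, d i < p) (hj : j < n) :
    digitSeq p (∑ i ∈ range n, d i * p ^ i) j = d j := by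
  induction n generalizing d j with
  | zero => omega
  | succ n ih =>
    have hp : 0 < p := (Nat.zero_le _).trans_lt (hd 0 (by omega))
    have hsplit : ∑ i ∈ range (n + 1), d i * p ^ i
        = d 0 + p * ∑ i ∈ range n, d (i + 1) * p ^ i := by
      rw [sum_range_succ', mul_sum]
      simp only [pow_succ', pow_zero, mul_one]
      rw [add_comm]
      congr 1
      exact sum_congr rfl fun i _ => by ring
    rw [hsplit]
    cases j with
    | zero => rw [digitSeq_zero, Nat.add_mul_mod_self_left, Nat.mod_eq_of_lt (hd 0 (by omega))]
    | succ j =>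
      rw [digitSeq_succ, Nat.add_mul_div_left _ _ hp, Nat.div_eq_of_lt (hd 0 (by omega)),
        zero_add]
      exact ih (fun i hi => hd (i + 1) (by omega)) (by omega)

theorem odo_digitSeq (hp : 2 ≤ p) (b : ℕ) : odo p (digitSeq p b) = digitSeq p (b + 1) := by
  induction b using Nat.strong_induction_on with
  | _ b ih =>
  have hb := Nat.div_add_mod b p
  have hlt := Nat.mod_lt b (show 0 < p by omega)
  have hne := exists_digitSeq_ne hp b
  funext i
  by_cases hcarry : b % p = p - 1
  · have hsucc : b + 1 = p * (b / p + 1) := by rw [mul_add]; omega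
    have h0 : digitSeq p b 0 = p - 1 := by rw [digitSeq_zero, hcarry]
    cases i with
    | zero => rw [odo_zero_of_head_eq h0 hne, digitSeq_zero, hsucc, Nat.mul_mod_right]
    | succ i =>
      simp only [odo_succ_of_head_eq h0 hne, digitSeq_succ, hsucc,
        Nat.mul_div_cancel_left _ (show 0 < p by omega), ih _ (Nat.div_lt_self (by omega) hp)]
  · have hnocarry : b % p + 1 < p := by omega
    have hsucc : b + 1 = (b % p + 1) + p * (b / p) := by omega
    have h0 : digitSeq p b 0 ≠ p - 1 := by rwa [digitSeq_zero]
    cases i with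
    | zero =>
      rw [odo_zero_of_head_ne h0, digitSeq_zero, digitSeq_zero, hsucc, Nat.add_mul_mod_self_left,
        Nat.mod_eq_of_lt hnocarry]
    | succ i =>
      rw [odo_succ_of_head_ne h0, digitSeq_succ, digitSeq_succ, hsucc,
        Nat.add_mul_div_left _ _ (by omega), Nat.div_eq_of_lt hnocarry, zero_add]

end DigitSeq

section NatPhi

variable {p : ℕ}

noncomputable def natPhi (p b : ℕ) : ℕ := phi p (digitSeq p b)

noncomputable def natPhiSum (p a n : ℕ) : ℕ := ∑ j ∈ range n, natPhi p (a + j)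

theorem natPhi_le (hp : 2 ≤ p) (b : ℕ) : natPhi p b ≤ p - 2 := by
  have hne := apply_firstNot_ne (exists_digitSeq_ne hp b)
  have hlt := digitSeq_lt (by omega : 0 < p) b (firstNot p (digitSeq p b))
  rw [natPhi, phi]
  omega

theorem natPhi_mul_add_of_lt {q r : ℕ} (hr : r < p - 1) : natPhi p (p * q + r) = r := by
  have hmod : (p * q + r) % p = r := by rw [Nat.mul_add_mod, Nat.mod_eq_of_lt (by omega)]
  rw [natPhi, phi_of_head_ne] <;> rw [digitSeq_zero, hmod]
  omega

theorem natPhi_mul_add_pred (hp : 2 ≤ p) (q : ℕ) : natPhi p (p * q + (p - 1)) = natPhi p q := by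
  have hmod : (p * q + (p - 1)) % p = p - 1 := by
    rw [Nat.mul_add_mod, Nat.mod_eq_of_lt (by omega)]
  have hdiv : (p * q + (p - 1)) / p = q := by
    rw [Nat.mul_add_div (by omega), Nat.div_eq_of_lt (by omega), add_zero]
  rw [natPhi, phi_of_head_eq (by rw [digitSeq_zero, hmod]) (exists_digitSeq_ne hp _)]
  simp only [digitSeq_succ, hdiv, natPhi]

theorem natPhiSum_succ (a n : ℕ) :
    natPhiSum p a (n + 1) = natPhi p a + natPhiSum p (a + 1) n := by
  simp only [natPhiSum, sum_range_succ', add_zero, add_assoc, add_comm 1]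
  rw [add_comm]

theorem phiSum_eq_natPhiSum (hp : 2 ≤ p) {x : ℕ → ℕ} {b m N : ℕ}
    (hx : ∀ i < N, x i = digitSeq p b i) (hb : b + m < p ^ N) :
    phiSum p m x = natPhiSum p b m := by
  induction m generalizing x b with
  | zero => simp [phiSum, natPhiSum]
  | succ m ih =>
    have hne := exists_digitSeq_ne_of_lt hp (show b + 1 < p ^ N by omega)
    rw [phiSum_succ, natPhiSum_succ, phi_congr hx hne, natPhi]
    congr 1
    refine ih (fun i hi => ?_) (by omega)
    rw [odo_congr hx hne i hi, odo_digitSeq hp]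

end NatPhi

section Measure

variable {p : ℕ}

theorem measurable_digitsOf (p : ℕ) : Measurable (digitsOf p) :=
  measurable_pi_lambda _ fun _ =>
    (measurable_from_top (f := fun z : ℤ => z.toNat % p)).comp
      (Int.measurable_floor.comp (measurable_id.mul_const _))

theorem digitsOf_eq_digitSeq (hp : 0 < p) {N c i : ℕ} {u : ℝ}
    (hu : u ∈ Set.Ico ((c : ℝ) / p ^ N) ((c + 1) / p ^ N)) (hi : i < N) :
    digitsOf p u i = digitSeq p c (N - 1 - i) := by
  have hpN : (0 : ℝ) < (p : ℝ) ^ N := by positivity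
  have hc : ⌊u * (p : ℝ) ^ N⌋₊ = c := by
    rw [Nat.floor_eq_iff (by nlinarith [hu.1, show (0 : ℝ) ≤ c / p ^ N by positivity])]
    exact ⟨(div_le_iff₀ hpN).mp hu.1, (lt_div_iff₀ hpN).mp hu.2⟩
  have hsplit : u * (p : ℝ) ^ (i + 1) = u * (p : ℝ) ^ N / ((p ^ (N - 1 - i) : ℕ) : ℝ) := by
    rw [eq_div_iff (by positivity), Nat.cast_pow, mul_assoc, ← pow_add]
    congr 2
    omega
  rw [digitsOf, Int.floor_toNat, hsplit, Nat.floor_div_natCast, hc]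
  rfl

theorem lam_pos_of_cylinder_subset (hp : 0 < p) {N : ℕ} {d : ℕ → ℕ} (hd : ∀ i < N, d i < p)
    {S : Set (ℕ → ℕ)} (hS : {x | ∀ i < N, x i = d i} ⊆ S) : 0 < lam p S := by
  -- the digits of `u` are read from the most significant one, so `c` lists `d` backwards
  set c := ∑ i ∈ range N, d (N - 1 - i) * p ^ i
  have hcN : c < p ^ N := sum_mul_pow_lt fun i hi => hd _ (by omega)
  have hpN : (0 : ℝ) < (p : ℝ) ^ N := by positivity
  set I := Set.Ico ((c : ℝ) / p ^ N) ((c + 1) / p ^ N)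
  have hI : I ⊆ Set.Ico 0 1 := by
    refine Set.Ico_subset_Ico (by positivity) ?_
    rw [div_le_one hpN]
    exact_mod_cast hcN
  have hIS : I ⊆ digitsOf p ⁻¹' S := fun u hu => hS fun i hi => by
    rw [digitsOf_eq_digitSeq hp hu hi,
      digitSeq_sum_mul_pow (fun j hj => hd _ (by omega)) (by omega)]
    congr 1
    omega
  calc (0 : ℝ≥0∞) < volume I := by
        rw [Real.volume_Ico, ENNReal.ofReal_pos, ← sub_div]
        simp [hpN]
    _ = volume.restrict (Set.Ico (0 : ℝ) 1) I := by
        rw [Measure.restrict_apply measurableSet_Ico, Set.inter_eq_left.mpr hI]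
    _ ≤ volume.restrict (Set.Ico (0 : ℝ) 1) (digitsOf p ⁻¹' S) := measure_mono hIS
    _ ≤ lam p S := Measure.le_map_apply (measurable_digitsOf p).aemeasurable S

end Measure

section Support

variable {p : ℕ}

theorem floor_mul_pow_succ (hp : 0 < p) (u : ℝ) (n : ℕ) :
    ⌊u * (p : ℝ) ^ (n + 1)⌋₊ = p * ⌊u * (p : ℝ) ^ n⌋₊ + digitsOf p u n := by
  have hdiv : ⌊u * (p : ℝ) ^ (n + 1)⌋₊ / p = ⌊u * (p : ℝ) ^ n⌋₊ := by
    rw [← Nat.floor_div_natCast, pow_succ, ← mul_assoc, mul_div_cancel_right₀ _ (by positivity)]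
  rw [digitsOf, Int.floor_toNat, ← hdiv, Nat.div_add_mod]

theorem digitsOf_mem_gammaStar (hp : 2 ≤ p) {u : ℝ} (hu : 0 ≤ u) :
    digitsOf p u ∈ GammaStar p := by
  refine ⟨fun i => Nat.mod_lt _ (by omega), Set.infinite_of_forall_exists_gt fun K => ?_⟩
  by_contra! htop
  -- `g n = 1 - fract (u * p ^ n)` lies in `(0, 1]`, and each digit `p - 1` multiplies it by `p`.
  set g : ℕ → ℝ := fun n => (⌊u * (p : ℝ) ^ n⌋₊ + 1 : ℝ) - u * (p : ℝ) ^ n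
  have hg_pos : ∀ n, 0 < g n := fun n => by simp only [g, sub_pos, Nat.lt_floor_add_one]
  have hg_le : ∀ n, g n ≤ 1 := fun n => by
    simp only [g]; linarith [Nat.floor_le (by positivity : 0 ≤ u * (p : ℝ) ^ n)]
  have hg_succ : ∀ n, K < n → g (n + 1) = p * g n := by
    intro n hn
    have hdigit : digitsOf p u n = p - 1 := by
      by_contra h
      exact absurd (htop n h) (by omega)
    have hfloor : (⌊u * (p : ℝ) ^ (n + 1)⌋₊ : ℝ) = p * ⌊u * (p : ℝ) ^ n⌋₊ + p - 1 := by
      rw [floor_mul_pow_succ (by omega), hdigit]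
      push_cast [Nat.cast_sub (by omega : 1 ≤ p)]
      ring
    simp only [g]
    rw [hfloor, pow_succ]
    ring
  have hg_pow : ∀ n, g (K + 1 + n) = p ^ n * g (K + 1) := by
    intro n
    induction n with
    | zero => simp
    | succ n ih => rw [← add_assoc, hg_succ _ (by omega), ih, pow_succ]; ring
  obtain ⟨n, hn⟩ :=
    pow_unbounded_of_one_lt (1 / g (K + 1)) (by exact_mod_cast hp : (1 : ℝ) < p)
  rw [div_lt_iff₀ (hg_pos _)] at hn
  linarith [hg_le (K + 1 + n), hg_pow n]

theorem measurableSet_gammaStar (p : ℕ) : MeasurableSet (GammaStar p) := by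
  have hdigits : MeasurableSet {x : ℕ → ℕ | ∀ i, x i < p} :=
    measurableSet_setOfPred.mpr <| Measurable.forall fun i =>
      (measurable_from_top (f := fun k : ℕ => k < p)).comp (measurable_pi_apply i)
  have hnontop : Measurable fun x : ℕ → ℕ => {i | x i ≠ p - 1} :=
    measurable_set_iff.mpr fun i =>
      (measurable_from_top (f := fun k : ℕ => k ≠ p - 1)).comp (measurable_pi_apply i)
  exact hdigits.inter (MeasurableSet.setOfPred_infinite.preimage hnontop)

theorem ae_mem_gammaStar (hp : 2 ≤ p) : ∀ᵐ x ∂lam p, x ∈ GammaStar p :=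
  (ae_map_iff (measurable_digitsOf p).aemeasurable (measurableSet_gammaStar p)).mpr
    (ae_restrict_of_forall_mem measurableSet_Ico fun _ hu => digitsOf_mem_gammaStar hp hu.1)

theorem exists_phiSum_eq_natPhiSum (hp : 2 ≤ p) {x : ℕ → ℕ} (hx : x ∈ GammaStar p) (m : ℕ) :
    ∃ b, phiSum p m x = natPhiSum p b m := by
  obtain ⟨i₀, hi₀, hmi₀⟩ := hx.2.exists_gt m
  set b := ∑ i ∈ range (i₀ + 1), x i * p ^ i
  have hdigits : ∀ i < i₀ + 1, x i = digitSeq p b i := fun i hi =>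
    (digitSeq_sum_mul_pow (fun j _ => hx.1 j) hi).symm
  have hpi₀ : 0 < p ^ i₀ := by positivity
  have htop : b / p ^ i₀ < p - 1 := by
    have hlt : b / p ^ i₀ < p := by
      rw [Nat.div_lt_iff_lt_mul hpi₀, ← pow_succ']
      exact sum_mul_pow_lt fun j _ => hx.1 j
    have : b / p ^ i₀ % p ≠ p - 1 := by rw [← digitSeq, ← hdigits i₀ (by omega)]; exact hi₀
    rw [Nat.mod_eq_of_lt hlt] at this
    omega
  have hm : m < p ^ i₀ :=
    (Nat.lt_pow_self (by omega)).trans_le (Nat.pow_le_pow_right (by omega) hmi₀.le)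
  refine ⟨b, phiSum_eq_natPhiSum hp hdigits ?_⟩
  have := (Nat.div_lt_iff_lt_mul hpi₀).mp htop
  calc b + m < (p - 1) * p ^ i₀ + p ^ i₀ := by omega
    _ = p ^ (i₀ + 1) := by rw [← add_one_mul, Nat.sub_add_cancel (by omega), pow_succ']

theorem pim_ne_zero_iff (hp : 2 ≤ p) {m j : ℕ} : pim p m j ≠ 0 ↔ ∃ b, natPhiSum p b m = j := by
  constructor
  · intro h
    obtain ⟨x, hxj, hx⟩ :=
      Measure.exists_mem_of_measure_ne_zero_of_ae h (ae_restrict_of_ae (ae_mem_gammaStar hp))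
    obtain ⟨b, hb⟩ := exists_phiSum_eq_natPhiSum hp hx m
    exact ⟨b, hb ▸ hxj⟩
  · rintro ⟨b, rfl⟩
    refine (lam_pos_of_cylinder_subset (N := b + m) (by omega)
      (fun i _ => digitSeq_lt (by omega) b i) fun x hx => ?_).ne'
    exact phiSum_eq_natPhiSum hp hx (Nat.lt_pow_self (by omega))

theorem isGreatest_D (hp : 2 ≤ p) (n : ℕ) :
    IsGreatest (Set.range fun a => natPhiSum p a n) (D p n) := by
  have hsupp : {j | pim p n j ≠ 0} = Set.range fun a => natPhiSum p a n := by
    ext j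
    exact pim_ne_zero_iff hp
  have hbdd : BddAbove (Set.range fun a => natPhiSum p a n) := by
    refine ⟨n * (p - 2), ?_⟩
    rintro _ ⟨a, rfl⟩
    simpa [natPhiSum] using sum_le_card_nsmul (range n) _ _ fun j _ => natPhi_le hp (a + j)
  rw [D, hsupp]
  exact ⟨Nat.sSup_mem (Set.range_nonempty _) hbdd, fun _ h => le_csSup hbdd h⟩

theorem natPhiSum_le_D (hp : 2 ≤ p) (a n : ℕ) : natPhiSum p a n ≤ D p n :=
  (isGreatest_D hp n).2 ⟨a, rfl⟩

theorem exists_natPhiSum_eq_D (hp : 2 ≤ p) (n : ℕ) : ∃ a, natPhiSum p a n = D p n :=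
  (isGreatest_D hp n).1

end Support

section Blocks

variable {p : ℕ}

theorem sum_range_add_add_le {r s : ℕ} (h : r ≤ s) (k : ℕ) :
    ∑ i ∈ range (r + k), i + ∑ i ∈ range s, i ≤ ∑ i ∈ range (s + k), i + ∑ i ∈ range r, i := by
  rw [sum_range_add, sum_range_add]
  have : ∑ i ∈ range k, (r + i) ≤ ∑ i ∈ range k, (s + i) := sum_le_sum fun i _ => by omega
  omega

theorem natPhiSum_add (a m n : ℕ) :
    natPhiSum p a (m + n) = natPhiSum p a m + natPhiSum p (a + m) n := by
  simp only [natPhiSum, sum_range_add, add_assoc]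

theorem natPhiSum_one (a : ℕ) : natPhiSum p a 1 = natPhi p a := by simp [natPhiSum]

theorem natPhiSum_mul_of_le {q k : ℕ} (hk : k ≤ p - 1) :
    natPhiSum p (p * q) k = ∑ i ∈ range k, i :=
  sum_congr rfl fun j hj => natPhi_mul_add_of_lt (by simp at hj; omega)

theorem natPhiSum_mul_mul (hp : 2 ≤ p) (q n : ℕ) :
    natPhiSum p (p * q) (p * n) = n * ∑ i ∈ range (p - 1), i + natPhiSum p q n := by
  induction n with
  | zero => simp [natPhiSum]
  | succ n ih =>
    have hblock : natPhiSum p (p * q + p * n) (p - 1 + 1)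
        = ∑ i ∈ range (p - 1), i + natPhi p (q + n) := by
      rw [natPhiSum_add, ← mul_add, natPhiSum_mul_of_le le_rfl, natPhiSum_one,
        natPhi_mul_add_pred hp]
    rw [show p * (n + 1) = p * n + (p - 1 + 1) by rw [Nat.sub_add_cancel (by omega)]; ring,
      natPhiSum_add, ih, hblock, natPhiSum_add q n 1, natPhiSum_one]
    ring

theorem natPhiSum_mul_mul_add (hp : 2 ≤ p) (q n : ℕ) {k : ℕ} (hk : k ≤ p - 1) :
    natPhiSum p (p * q) (p * n + k)
      = n * ∑ i ∈ range (p - 1), i + natPhiSum p q n + ∑ i ∈ range k, i := by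
  rw [natPhiSum_add, natPhiSum_mul_mul hp, ← mul_add, natPhiSum_mul_of_le hk]

theorem natPhiSum_mul_add_add_sum {q r : ℕ} (hr : r ≤ p - 1) (N : ℕ) :
    natPhiSum p (p * q + r) N + ∑ i ∈ range r, i = natPhiSum p (p * q) (r + N) := by
  rw [natPhiSum_add, natPhiSum_mul_of_le hr, add_comm]

theorem natPhiSum_add_sum_of_add_lt (hp : 2 ≤ p) (q n : ℕ) {r k : ℕ} (hrk : r + k < p) :
    natPhiSum p (p * q + r) (p * n + k) + ∑ i ∈ range r, i
      = n * ∑ i ∈ range (p - 1), i + natPhiSum p q n + ∑ i ∈ range (r + k), i := by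
  rw [natPhiSum_mul_add_add_sum (by omega), show r + (p * n + k) = p * n + (r + k) by ring,
    natPhiSum_mul_mul_add hp q n (by omega)]

theorem natPhiSum_add_sum_of_le_add (hp : 2 ≤ p) (q n : ℕ) {r k : ℕ} (hr : r < p) (hk : k < p)
    (hrk : p ≤ r + k) :
    natPhiSum p (p * q + r) (p * n + k) + ∑ i ∈ range r, i
      = (n + 1) * ∑ i ∈ range (p - 1), i + natPhiSum p q (n + 1) + ∑ i ∈ range (r + k - p), i := by
  rw [natPhiSum_mul_add_add_sum (by omega),
    show r + (p * n + k) = p * (n + 1) + (r + k - p) by rw [mul_add]; omega,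
    natPhiSum_mul_mul_add hp q (n + 1) (by omega)]

end Blocks

section Degree

variable {p : ℕ}

theorem D_le_D_succ (hp : 2 ≤ p) (n : ℕ) : D p n ≤ D p (n + 1) := by
  obtain ⟨a, ha⟩ := exists_natPhiSum_eq_D hp n
  calc D p n = natPhiSum p a n := ha.symm
    _ ≤ natPhiSum p a (n + 1) := by rw [natPhiSum_add]; omega
    _ ≤ D p (n + 1) := natPhiSum_le_D hp a (n + 1)

theorem D_mul (hp : 2 ≤ p) (n : ℕ) : D p (p * n) = n * ∑ i ∈ range (p - 1), i + D p n := by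
  have hdecomp : ∀ q r, r < p →
      natPhiSum p (p * q + r) (p * n) = n * ∑ i ∈ range (p - 1), i + natPhiSum p q n :=
    fun q r hr => by
      have := natPhiSum_add_sum_of_add_lt hp q n (k := 0) (by omega)
      simp only [add_zero] at this
      omega
  apply le_antisymm
  · obtain ⟨a, ha⟩ := exists_natPhiSum_eq_D hp (p * n)
    rw [← ha, ← Nat.div_add_mod a p, hdecomp _ _ (Nat.mod_lt a (by omega))]
    exact Nat.add_le_add_left (natPhiSum_le_D hp _ n) _
  · obtain ⟨q, hq⟩ := exists_natPhiSum_eq_D hp n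
    calc n * ∑ i ∈ range (p - 1), i + D p n = natPhiSum p (p * q + 0) (p * n) := by
          rw [hdecomp q 0 (by omega), hq]
      _ ≤ D p (p * n) := natPhiSum_le_D hp _ _

theorem D_mul_add_of_lt (hp : 2 ≤ p) (n : ℕ) {k : ℕ} (hk0 : 0 < k) (hkp : k < p) :
    D p (p * n + k) + ∑ i ∈ range (p - k), i
      = (n + 1) * ∑ i ∈ range (p - 1), i + max (D p n + (p - 1 - k)) (D p (n + 1)) := by
  have hsucc : ∑ i ∈ range (p - k), i = ∑ i ∈ range (p - 1 - k), i + (p - 1 - k) := by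
    rw [← sum_range_succ]; congr 2; omega
  rw [add_mul, one_mul]
  apply le_antisymm
  · obtain ⟨a, ha⟩ := exists_natPhiSum_eq_D hp (p * n + k)
    rw [← ha, ← Nat.div_add_mod a p]
    have hr := Nat.mod_lt a (show 0 < p by omega)
    rcases lt_or_ge (a % p + k) p with hrk | hrk
    · have h := natPhiSum_add_sum_of_add_lt hp (a / p) n hrk
      have hconv := sum_range_add_add_le (show a % p ≤ p - 1 - k by omega) k
      rw [show p - 1 - k + k = p - 1 by omega] at hconv
      have := natPhiSum_le_D hp (a / p) n
      omega
    · have h := natPhiSum_add_sum_of_le_add hp (a / p) n hr hkp hrk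
      have hconv := sum_range_add_add_le (Nat.zero_le (a % p + k - p)) (p - k)
      rw [show a % p + k - p + (p - k) = a % p by omega, zero_add, sum_range_zero] at hconv
      rw [add_mul, one_mul] at h
      have := natPhiSum_le_D hp (a / p) (n + 1)
      omega
  · obtain ⟨q, hq⟩ := exists_natPhiSum_eq_D hp n
    obtain ⟨q', hq'⟩ := exists_natPhiSum_eq_D hp (n + 1)
    have h := natPhiSum_add_sum_of_add_lt hp q n (r := p - 1 - k) (k := k) (by omega)
    have h' := natPhiSum_add_sum_of_le_add hp q' n (r := p - k) (k := k) (by omega) hkp (by omega)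
    rw [show p - 1 - k + k = p - 1 by omega] at h
    rw [show p - k + k - p = 0 by omega, sum_range_zero, add_mul, one_mul] at h'
    have := natPhiSum_le_D hp (p * q + (p - 1 - k)) (p * n + k)
    have := natPhiSum_le_D hp (p * q' + (p - k)) (p * n + k)
    omega

theorem D_mul_add (hp : 2 ≤ p) (n : ℕ) {k : ℕ} (hk0 : 0 < k) (hkp : k ≤ p) :
    D p (p * n + k) + ∑ i ∈ range (p - k), i
      = (n + 1) * ∑ i ∈ range (p - 1), i + max (D p n + (p - 1 - k)) (D p (n + 1)) := by
  rcases hkp.lt_or_eq with hk | hk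
  · exact D_mul_add_of_lt hp n hk0 hk
  · rw [hk, show p * n + p = p * (n + 1) by ring, D_mul hp, Nat.sub_self, sum_range_zero, add_zero,
      show p - 1 - p = 0 by omega, add_zero, max_eq_right (D_le_D_succ hp n)]

end Degree

/-- with `S_m = D_{m+1} - D_m`, for every `m ≥ 0` and `0 < k < p`,
`S_{pm+k} = p - k - 1 - 𝟙{S_m < p-1-k}`. -/
theorem statement_10 (p : ℕ) (hp : 3 ≤ p) (m k : ℕ) (hk0 : 0 < k) (hkp : k < p) :
    Sseq p (p * m + k) =
      p - k - 1 - (if Sseq p m < p - 1 - k then 1 else 0) := by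
  have hp2 : 2 ≤ p := by omega
  have hk := D_mul_add hp2 m hk0 hkp.le
  have hk1 := D_mul_add hp2 m (k := k + 1) (by omega) hkp
  have hsucc : ∑ i ∈ range (p - k), i = ∑ i ∈ range (p - (k + 1)), i + (p - (k + 1)) := by
    rw [← sum_range_succ]; congr 2; omega
  have hmono := D_le_D_succ hp2 m
  rw [← add_assoc] at hk1
  unfold Sseq
  split_ifs <;> omega

end Chacon
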